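/- Let v₂, v₃, v₄ ∈ ℂ⁴ be the explicit vectors v₂ = ( (3/122)·(−185 + 75√5 + i·√(−104150 + 47070√5)), (1/61)·(60 − 54√5), −(3/61)·i·√(−575 + 426√5), 1 ), v₃ = ( (3/122)·(−185 + 75√5 − i·√(−104150 + 47070√5)), (1/61)·(60 − 54√5), (3/61)·i·√(−575 + 426√5), 1 ), and v₄ = ( −(3/122)·(185 + 75√5 − √(104150 + 47070√5)), (1/61)·(60 + 54√5), (3/61)·√(575 + 426√5), 1 ). Then the ℂ-linear span of {v₂, v₃, v₄} in ℂ⁴ contains no nonzero vector with all four coordinates rational: if x ∈ ℚ⁴ and (x regarded in ℂ⁴) lies in span_ℂ{v₂, v₃, v₄}, then x = 0. -/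
import Mathlib


/-!
STATEMENT 16: The ℂ-linear span of the explicit vectors `v₂, v₃, v₄ ∈ ℂ⁴` contains no
nonzero vector with all coordinates rational.
-/

noncomputable section

/-- The vector `v₂`. -/
def v2 : Fin 4 → ℂ :=
  ![((3 : ℂ) / 122) * ((((-185 : ℝ) + 75 * Real.sqrt 5 : ℝ) : ℂ) +
      Complex.I * ((Real.sqrt (-104150 + 47070 * Real.sqrt 5) : ℝ) : ℂ)),
    (((60 - 54 * Real.sqrt 5) / 61 : ℝ) : ℂ),
    -(((3 : ℂ) / 61) * Complex.I * ((Real.sqrt (-575 + 426 * Real.sqrt 5) : ℝ) : ℂ)),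
    1]

/-- The vector `v₃`. -/
def v3 : Fin 4 → ℂ :=
  ![((3 : ℂ) / 122) * ((((-185 : ℝ) + 75 * Real.sqrt 5 : ℝ) : ℂ) -
      Complex.I * ((Real.sqrt (-104150 + 47070 * Real.sqrt 5) : ℝ) : ℂ)),
    (((60 - 54 * Real.sqrt 5) / 61 : ℝ) : ℂ),
    ((3 : ℂ) / 61) * Complex.I * ((Real.sqrt (-575 + 426 * Real.sqrt 5) : ℝ) : ℂ),
    1]

/-- The vector `v₄`. -/
def v4 : Fin 4 → ℂ :=
  ![-(((3 : ℂ) / 122) * (((185 + 75 * Real.sqrt 5 -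
      Real.sqrt (104150 + 47070 * Real.sqrt 5) : ℝ) : ℂ))),
    (((60 + 54 * Real.sqrt 5) / 61 : ℝ) : ℂ),
    ((3 : ℂ) / 61) * ((Real.sqrt (575 + 426 * Real.sqrt 5) : ℝ) : ℂ),
    1]

lemma irr5 : Irrational (Real.sqrt 5) := Nat.Prime.irrational_sqrt (by norm_num)

lemma rat_indep (a b : ℚ) (h : (a : ℝ) + b * Real.sqrt 5 = 0) : a = 0 ∧ b = 0 := by
  by_cases hb : b = 0
  · subst hb; simp at h; exact ⟨by exact_mod_cast h, rfl⟩
  · exfalso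
    apply irr5
    refine ⟨-a / b, ?_⟩
    push_cast
    have hbR : (b : ℝ) ≠ 0 := by exact_mod_cast hb
    field_simp
    linarith [h]

lemma sq5 : Real.sqrt 5 ^ 2 = 5 := Real.sq_sqrt (by norm_num)

lemma two_le_s5 : (2 : ℝ) ≤ Real.sqrt 5 := by
  rw [show (2:ℝ) = Real.sqrt 4 by
    rw [show (4:ℝ) = 2^2 by norm_num, Real.sqrt_sq]; norm_num]
  exact Real.sqrt_le_sqrt (by norm_num)

lemma Bm_nonneg : (0:ℝ) ≤ -575 + 426 * Real.sqrt 5 := by nlinarith [two_le_s5]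
lemma Bp_nonneg : (0:ℝ) ≤ 575 + 426 * Real.sqrt 5 := by nlinarith [two_le_s5]

lemma sqBm : Real.sqrt (-575 + 426 * Real.sqrt 5) ^ 2 = -575 + 426 * Real.sqrt 5 :=
  Real.sq_sqrt Bm_nonneg
lemma sqBp : Real.sqrt (575 + 426 * Real.sqrt 5) ^ 2 = 575 + 426 * Real.sqrt 5 :=
  Real.sq_sqrt Bp_nonneg

lemma facAm : Real.sqrt (-104150 + 47070 * Real.sqrt 5)
    = (3 * Real.sqrt 5 - 5) * Real.sqrt (-575 + 426 * Real.sqrt 5) := by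
  rw [show (-104150 + 47070 * Real.sqrt 5 : ℝ)
      = ((3 * Real.sqrt 5 - 5) * Real.sqrt (-575 + 426 * Real.sqrt 5)) ^ 2 by
    rw [mul_pow, sqBm]; nlinarith [sq5]]
  exact Real.sqrt_sq (by nlinarith [two_le_s5, Real.sqrt_nonneg (-575 + 426 * Real.sqrt 5)])

lemma facAp : Real.sqrt (104150 + 47070 * Real.sqrt 5)
    = (5 + 3 * Real.sqrt 5) * Real.sqrt (575 + 426 * Real.sqrt 5) := by
  rw [show (104150 + 47070 * Real.sqrt 5 : ℝ)
      = ((5 + 3 * Real.sqrt 5) * Real.sqrt (575 + 426 * Real.sqrt 5)) ^ 2 by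
    rw [mul_pow, sqBp]; nlinarith [sq5]]
  exact Real.sqrt_sq (by positivity)

/-- `1, √5, u, √5·u` are `ℚ`-linearly independent, where `u = √(575+426√5)`. -/
lemma key_indep (a b c d : ℚ)
    (h : (a : ℝ) + (b : ℝ) * Real.sqrt 5
        + ((c : ℝ) + (d : ℝ) * Real.sqrt 5) * Real.sqrt (575 + 426 * Real.sqrt 5) = 0) :
    a = 0 ∧ b = 0 ∧ c = 0 ∧ d = 0 := by
  set s := Real.sqrt 5 with hs
  set u := Real.sqrt (575 + 426 * Real.sqrt 5) with hu
  have hs5 : s ^ 2 = 5 := sq5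
  have hu2 : u ^ 2 = 575 + 426 * s := sqBp
  by_cases hcd : (c : ℝ) + (d : ℝ) * s = 0
  · obtain ⟨hc, hd⟩ := rat_indep c d hcd
    rw [hcd] at h
    have hab : (a : ℝ) + (b : ℝ) * s = 0 := by linarith [h]
    obtain ⟨ha, hb⟩ := rat_indep a b hab
    exact ⟨ha, hb, hc, hd⟩
  · exfalso
    -- square the relation to land in ℚ(√5)
    have hsq : ((a:ℝ) + b * s)^2 = ((c:ℝ) + d * s)^2 * u^2 := by
      linear_combination ((a:ℝ) + b * s - ((c:ℝ) + d * s) * u) * h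
    have hreal : ((a^2 + 5*b^2 - 575*(c^2 + 5*d^2) - 4260*c*d : ℚ) : ℝ)
        + ((2*a*b - 426*(c^2 + 5*d^2) - 1150*c*d : ℚ) : ℝ) * s = 0 := by
      push_cast
      linear_combination hsq + ((c:ℝ) + (d:ℝ)*s)^2 * hu2
        + (-(b:ℝ)^2 + 852*(c:ℝ)*d + 575*(d:ℝ)^2 + 426*(d:ℝ)^2*s) * hs5
    obtain ⟨hE1, hE2⟩ := rat_indep _ _ hreal
    -- c² - 5d² ≠ 0 in ℚ
    have hD : (c:ℚ)^2 - 5*d^2 ≠ 0 := by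
      intro h0
      by_cases hd : d = 0
      · apply hcd
        subst hd
        have hc : c = 0 := by
          have : c^2 = 0 := by linarith
          exact pow_eq_zero_iff (by norm_num) |>.mp this
        simp [hc]
      · apply irr5
        refine ⟨|c / d|, ?_⟩
        have hdR : (d : ℝ) ≠ 0 := by exact_mod_cast hd
        have hsq5 : ((c:ℝ)/d)^2 = 5 := by
          field_simp
          have : (c:ℝ)^2 - 5*(d:ℝ)^2 = 0 := by exact_mod_cast h0
          linarith
        have h5 : Real.sqrt 5 = |(c:ℝ)/(d:ℝ)| := by
          rw [← hsq5, Real.sqrt_sq_eq_abs]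
        rw [Rat.cast_abs]
        push_cast
        exact h5.symm
    -- derive the impossible quartic identity
    have hF1 : (5*b*d - a*c)^2 + 5*(a*d - b*c)^2 = 575*((c:ℚ)^2 - 5*d^2)^2 := by
      linear_combination (c^2 + 5*d^2) * hE1 - 10*c*d * hE2
    have hF2 : 2*((5*b*d - a*c)*(a*d - b*c)) = 426*((c:ℚ)^2 - 5*d^2)^2 := by
      linear_combination (c^2 + 5*d^2) * hE2 - 2*c*d * hE1
    have hF3 : ((5*b*d - a*c)^2 - 5*(a*d - b*c)^2)^2 = -576755*((c:ℚ)^2 - 5*d^2)^4 := by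
      linear_combination ((5*b*d - a*c)^2 + 5*(a*d - b*c)^2 + 575*((c:ℚ)^2 - 5*d^2)^2) * hF1
        - 5*(2*((5*b*d - a*c)*(a*d - b*c)) + 426*((c:ℚ)^2 - 5*d^2)^2) * hF2
    have h4 : (0:ℚ) < ((c:ℚ)^2 - 5*d^2)^4 :=
      lt_of_le_of_ne (by positivity) (Ne.symm (pow_ne_zero 4 hD))
    nlinarith [sq_nonneg ((5*b*d - a*c)^2 - 5*(a*d - b*c)^2), hF3, h4]

theorem no_rational_vector_in_span :
    ∀ x : Fin 4 → ℚ,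
      (fun i => ((x i : ℚ) : ℂ)) ∈ Submodule.span ℂ ({v2, v3, v4} : Set (Fin 4 → ℂ)) →
      x = 0 := by
  intro x hx
  rw [show ({v2, v3, v4} : Set (Fin 4 → ℂ)) = insert v2 (insert v3 {v4}) from rfl] at hx
  obtain ⟨a, y, hy, hxy⟩ := Submodule.mem_span_insert.mp hx
  obtain ⟨b, z, hz, hyz⟩ := Submodule.mem_span_insert.mp hy
  obtain ⟨c, hc⟩ := Submodule.mem_span_singleton.mp hz
  subst hyz; rw [← hc] at hxy
  have key : ∀ i, ((x i : ℚ) : ℂ) = a * v2 i + b * v3 i + c * v4 i := by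
    intro i
    have := congrFun hxy i
    simpa [Pi.add_apply, Pi.smul_apply, smul_eq_mul, mul_add, add_assoc] using this
  have h0 := key 0
  have h1 := key 1
  have h2 := key 2
  have h3 := key 3
  simp only [v2, v3, v4, Matrix.cons_val_zero, Matrix.cons_val_one, Matrix.head_cons,
    Matrix.cons_val_two, Matrix.cons_val_three, Matrix.tail_cons] at h0 h1 h2 h3
  rw [facAm, facAp] at h0
  push_cast at h0 h1 h2 h3
  set sC : ℂ := ((Real.sqrt 5 : ℝ) : ℂ) with hsC
  set tC : ℂ := ((Real.sqrt (-575 + 426 * Real.sqrt 5) : ℝ) : ℂ) with htC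
  set uC : ℂ := ((Real.sqrt (575 + 426 * Real.sqrt 5) : ℝ) : ℂ) with huC
  have hE : (732:ℂ) * (x 0 : ℂ) + (1525 - 61*uC) * (x 1 : ℂ)
      + (1098*sC - 1830) * (x 2 : ℂ) + (1830 + 60*uC - 54*sC*uC) * (x 3 : ℂ) = 0 := by
    linear_combination (732:ℂ) * h0 + (1525 - 61*uC) * h1
      + (1098*sC - 1830) * h2 + (1830 + 60*uC - 54*sC*uC) * h3
  -- descend to ℝ
  set s : ℝ := Real.sqrt 5
  set u : ℝ := Real.sqrt (575 + 426 * Real.sqrt 5)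
  have hR : 732 * ((x 0 : ℚ):ℝ) + (1525 - 61*u) * ((x 1 : ℚ):ℝ)
      + (1098*s - 1830) * ((x 2 : ℚ):ℝ) + (1830 + 60*u - 54*s*u) * ((x 3 : ℚ):ℝ) = 0 := by
    have : ((732 * ((x 0 : ℚ):ℝ) + (1525 - 61*u) * ((x 1 : ℚ):ℝ)
        + (1098*s - 1830) * ((x 2 : ℚ):ℝ) + (1830 + 60*u - 54*s*u) * ((x 3 : ℚ):ℝ) : ℝ) : ℂ) = 0 := by
      push_cast
      linear_combination hE
    exact_mod_cast this
  have hfin := key_indep (732 * x 0 + 1525 * x 1 - 1830 * x 2 + 1830 * x 3)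
    (1098 * x 2) (-61 * x 1 + 60 * x 3) (-54 * x 3)
    (by push_cast; linear_combination hR)
  obtain ⟨hA, hB, hC, hD⟩ := hfin
  have hx3 : x 3 = 0 := by linarith
  have hx1 : x 1 = 0 := by linarith
  have hx2 : x 2 = 0 := by linarith
  have hx0 : x 0 = 0 := by linarith
  funext i
  fin_cases i <;> simpa using (by assumption : x _ = 0)

end
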